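/- (Sobolev inequality for Sobolev-Fourier-Lorentz spaces.) Let $1 < q \leq \tilde q < \infty$, $s, \tilde s \in \mathbb{R}$ with $s - \frac{d}{q} = \tilde s - \frac{d}{\tilde q}$, and $1 \leq r \leq \infty$. Then there is a constant $C$ such that $\|u\|_{\dot H^{\tilde s}_{\mathcal{L}^{\tilde q, r}}} \leq C \|u\|_{\dot H^{s}_{\mathcal{L}^{q,r}}}$ for all $u \in \dot H^{s}_{\mathcal{L}^{q,r}}(\mathbb{R}^d)$. -/

import Mathlib

/-!
With `a = s - s̃ = d/q - d/q̃ ≥ 0` the weight splits as `|ξ|^{s̃} = |ξ|^{-a} |ξ|^s` away from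
`ξ = 0`, and `|ξ|^{-a}` is in weak `L^{d/a}`: it exceeds `ρ^{-a}` only on the ball of radius `ρ`.
Splitting a rearrangement at `t = t/2 + t/2` therefore gives
`(|ξ|^{-a} F)^*(t) ≲ t^{-a/d} F^*(t/2)`, and since `1/q̃' = 1/q' + a/d` this turns
`t^{1/q̃'} (|ξ|^{-a} F)^*(t)` into `t^{1/q'} F^*(t/2)`; the Lorentz norms then compare because
`dt/t` is dilation invariant. In dimension `0` the space is a point of mass one, where Lorentz
norms only grow as `1/p` decreases.
-/

open MeasureTheory ENNReal Filter
open scoped FourierTransform ENNReal NNReal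

noncomputable section

/-- The decreasing rearrangement of `f` with respect to the measure `μ`. -/
def rearr {α : Type*} [MeasurableSpace α] (μ : Measure α) (f : α → ℝ≥0∞) (t : ℝ) : ℝ≥0∞ :=
  sInf {τ : ℝ≥0∞ | μ {x | τ < f x} ≤ ENNReal.ofReal t}

/-- The Lorentz `L^{p,r}` (quasi-)norm, defined via the decreasing rearrangement. -/
def lorentzNorm {α : Type*} [MeasurableSpace α] (μ : Measure α) (f : α → ℝ≥0∞)
    (p r : ℝ≥0∞) : ℝ≥0∞ :=
  if r = ∞ then ⨆ t ∈ Set.Ioi (0:ℝ), ENNReal.ofReal t ^ (1/p).toReal * rearr μ f t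
  else (∫⁻ t in Set.Ioi (0:ℝ),
      (ENNReal.ofReal t ^ (1/p).toReal * rearr μ f t) ^ r.toReal / ENNReal.ofReal t)
    ^ (1/r.toReal)

/-- The conjugate exponent `p'` with `1/p + 1/p' = 1`. -/
def dualExp (p : ℝ≥0∞) : ℝ≥0∞ := (1 - 1/p)⁻¹

abbrev Esp (d : ℕ) := EuclideanSpace ℝ (Fin d)

/-- Fourier-side Sobolev-Fourier-Lorentz norm: the Lorentz `L^{p',r}` norm of `|ξ|^s g(ξ)`. -/
def sflNorm (d : ℕ) (s : ℝ) (p r : ℝ≥0∞) (g : Esp d → ℂ) : ℝ≥0∞ :=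
  lorentzNorm volume (fun ξ => ENNReal.ofReal (‖ξ‖ ^ s) * ‖g ξ‖₊) (dualExp p) r

/-- The Sobolev-Fourier-Lorentz norm `‖u‖_{Ḣ^s_{𝓛^{p,r}}} = ‖|ξ|^s û(ξ)‖_{L^{p',r}}`. -/
def HsL (d : ℕ) (s : ℝ) (p r : ℝ≥0∞) (f : Esp d → ℂ) : ℝ≥0∞ :=
  sflNorm d s p r (𝓕 f)

/-- The Fourier-Lorentz norm `‖f‖_{𝓛^{p,r}} = ‖f̂‖_{L^{p',r}}`. -/
def FLnorm (d : ℕ) (p r : ℝ≥0∞) (f : Esp d → ℂ) : ℝ≥0∞ :=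
  lorentzNorm volume (fun ξ => (‖𝓕 f ξ‖₊ : ℝ≥0∞)) (dualExp p) r

end

open Set

section Rearrangement

variable {α : Type*} [MeasurableSpace α] {μ : Measure α}

lemma rearr_congr_ae {f g : α → ℝ≥0∞} (h : f =ᵐ[μ] g) : rearr μ f = rearr μ g := by
  funext t
  have hset (τ : ℝ≥0∞) : μ {x | τ < f x} = μ {x | τ < g x} :=
    measure_congr (h.mono fun x hx => congrArg (τ < ·) hx)
  simp only [rearr, hset]

lemma lorentzNorm_congr_ae {f g : α → ℝ≥0∞} (h : f =ᵐ[μ] g) (p r : ℝ≥0∞) :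
    lorentzNorm μ f p r = lorentzNorm μ g p r := by
  simp only [lorentzNorm, rearr_congr_ae h]

lemma rearr_eq_zero_of_measure_univ_le (f : α → ℝ≥0∞) {t : ℝ}
    (h : μ univ ≤ ENNReal.ofReal t) : rearr μ f t = 0 :=
  nonpos_iff_eq_zero.mp (sInf_le ((measure_mono (subset_univ _)).trans h))

lemma rearr_mul_le {f g : α → ℝ≥0∞} {t u : ℝ} (ht : 0 ≤ t) (hu : 0 ≤ u) {σ : ℝ≥0∞}
    (hσ0 : σ ≠ 0) (hσ : σ ≠ ∞) (hf : μ {x | σ < f x} ≤ ENNReal.ofReal t) :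
    rearr μ (fun x => f x * g x) (t + u) ≤ σ * rearr μ g u := by
  refine le_of_forall_gt_imp_ge_of_dense fun b hb => ?_
  have hτ : rearr μ g u < b / σ :=
    (ENNReal.lt_div_iff_mul_lt (.inl hσ0) (.inl hσ)).2 (by rwa [mul_comm])
  obtain ⟨τ, hτg, hτb⟩ := sInf_lt_iff.mp hτ
  have hsub : {x | σ * τ < f x * g x} ⊆ {x | σ < f x} ∪ {x | τ < g x} := by
    intro x hx
    by_contra hc
    simp only [mem_union, mem_ofPred_eq, not_or, not_lt] at hc
    exact (mul_le_mul' hc.1 hc.2).not_gt hx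
  have hmeas : μ {x | σ * τ < f x * g x} ≤ ENNReal.ofReal (t + u) := calc
    _ ≤ μ {x | σ < f x} + μ {x | τ < g x} := (measure_mono hsub).trans (measure_union_le _ _)
    _ ≤ ENNReal.ofReal t + ENNReal.ofReal u := add_le_add hf hτg
    _ = ENNReal.ofReal (t + u) := (ENNReal.ofReal_add ht hu).symm
  calc rearr μ (fun x => f x * g x) (t + u) ≤ σ * τ := sInf_le hmeas
    _ ≤ σ * (b / σ) := by gcongr
    _ = b := ENNReal.mul_div_cancel hσ0 hσ

end Rearrangement

lemma lintegral_Ioi_comp_mul_left (φ : ℝ → ℝ≥0∞) {c : ℝ} (hc : 0 < c) :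
    ∫⁻ t in Ioi 0, φ (c * t) = ENNReal.ofReal c⁻¹ * ∫⁻ t in Ioi 0, φ t := by
  have he : MeasurableEmbedding (c * ·) := (Homeomorph.mulLeft₀ c hc.ne').measurableEmbedding
  have hpre : (c * ·) ⁻¹' Ioi 0 = Ioi (0 : ℝ) := by
    ext t; simp [mul_pos_iff_of_pos_left hc]
  calc ∫⁻ t in Ioi 0, φ (c * t)
      = ∫⁻ t, φ t ∂(Measure.map (c * ·) (volume.restrict (Ioi 0))) := (he.lintegral_map φ).symm
    _ = ∫⁻ t, φ t ∂((Measure.map (c * ·) volume).restrict (Ioi 0)) := by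
        rw [he.restrict_map, hpre]
    _ = ENNReal.ofReal c⁻¹ * ∫⁻ t in Ioi 0, φ t := by
        rw [Real.map_volume_mul_left hc.ne', Measure.restrict_smul, lintegral_smul_measure,
          abs_of_pos (inv_pos.mpr hc), smul_eq_mul]

lemma lintegral_Ioi_comp_mul_left_div (φ : ℝ → ℝ≥0∞) {c : ℝ} (hc : 0 < c) :
    ∫⁻ t in Ioi 0, φ (c * t) / ENNReal.ofReal t = ∫⁻ t in Ioi 0, φ t / ENNReal.ofReal t := by
  have hpt : ∀ t ∈ Ioi (0 : ℝ), φ (c * t) / ENNReal.ofReal t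
      = ENNReal.ofReal c * (φ (c * t) / ENNReal.ofReal (c * t)) := by
    intro t ht
    rw [ENNReal.ofReal_mul hc.le, ENNReal.div_eq_inv_mul, ENNReal.div_eq_inv_mul,
      ENNReal.mul_inv (.inl (by simpa using hc)) (.inl ENNReal.ofReal_ne_top), ← mul_assoc,
      ← mul_assoc, ENNReal.mul_inv_cancel (by simpa using hc) ENNReal.ofReal_ne_top, one_mul]
  rw [setLIntegral_congr_fun measurableSet_Ioi hpt, lintegral_const_mul' _ _ ENNReal.ofReal_ne_top,
    lintegral_Ioi_comp_mul_left (fun t => φ t / ENNReal.ofReal t) hc, ← mul_assoc,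
    ← ENNReal.ofReal_mul hc.le, mul_inv_cancel₀ hc.ne', ENNReal.ofReal_one, one_mul]

section Lorentz

variable {α β : Type*} [MeasurableSpace α] [MeasurableSpace β] {μ : Measure α} {ν : Measure β}

lemma lorentzNorm_le_of_rearr_le {g : α → ℝ≥0∞} {f : β → ℝ≥0∞} {p p' r : ℝ≥0∞} (hr : r ≠ 0)
    {C : ℝ≥0∞} (hC : C ≠ ∞) {c : ℝ} (hc : 0 < c)
    (h : ∀ t, 0 < t → ENNReal.ofReal t ^ (1 / p).toReal * rearr μ g t
      ≤ C * (ENNReal.ofReal (c * t) ^ (1 / p').toReal * rearr ν f (c * t))) :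
    lorentzNorm μ g p r ≤ C * lorentzNorm ν f p' r := by
  set φ : ℝ → ℝ≥0∞ := fun t => ENNReal.ofReal t ^ (1 / p').toReal * rearr ν f t
  unfold lorentzNorm
  split_ifs with hr_top
  · exact iSup₂_le fun t ht =>
      (h t ht).trans (by gcongr; exact le_biSup φ (mem_Ioi.mpr (mul_pos hc ht)))
  · have hr_pos : 0 < r.toReal := ENNReal.toReal_pos hr hr_top
    have hint : ∫⁻ t in Ioi 0, (ENNReal.ofReal t ^ (1 / p).toReal * rearr μ g t) ^ r.toReal
          / ENNReal.ofReal t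
        ≤ ∫⁻ t in Ioi 0, C ^ r.toReal * (φ (c * t) ^ r.toReal / ENNReal.ofReal t) := by
      refine lintegral_mono_ae ((ae_restrict_mem measurableSet_Ioi).mono fun t ht => ?_)
      rw [← mul_div_assoc, ← ENNReal.mul_rpow_of_nonneg _ _ hr_pos.le]
      exact ENNReal.div_le_div_right (ENNReal.rpow_le_rpow (h t ht) hr_pos.le) _
    calc (∫⁻ t in Ioi 0, (ENNReal.ofReal t ^ (1 / p).toReal * rearr μ g t) ^ r.toReal
          / ENNReal.ofReal t) ^ (1 / r.toReal)
        ≤ (C ^ r.toReal * ∫⁻ t in Ioi 0, φ (c * t) ^ r.toReal / ENNReal.ofReal t)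
          ^ (1 / r.toReal) := by
          rw [← lintegral_const_mul' _ _ (ENNReal.rpow_ne_top_of_nonneg hr_pos.le hC)]
          gcongr
      _ = C * (∫⁻ t in Ioi 0, φ t ^ r.toReal / ENNReal.ofReal t) ^ (1 / r.toReal) := by
          rw [lintegral_Ioi_comp_mul_left_div (fun t => φ t ^ r.toReal) hc,
            ENNReal.mul_rpow_of_nonneg _ _ (by positivity), ← ENNReal.rpow_mul,
            mul_one_div_cancel hr_pos.ne', ENNReal.rpow_one]

lemma lorentzNorm_le_of_measure_univ_le_one (hμ : μ univ ≤ 1) (f : α → ℝ≥0∞) {p p' r : ℝ≥0∞}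
    (hr : r ≠ 0) (hp : (1 / p').toReal ≤ (1 / p).toReal) :
    lorentzNorm μ f p r ≤ lorentzNorm μ f p' r := by
  simpa using lorentzNorm_le_of_rearr_le (μ := μ) (ν := μ) (f := f) (g := f) (p := p) (p' := p')
    hr ENNReal.one_ne_top one_pos fun t _ => by
      rw [one_mul, one_mul]
      rcases le_total t 1 with ht | ht
      · gcongr ?_ * _
        exact ENNReal.rpow_le_rpow_of_exponent_ge (ENNReal.ofReal_le_one.mpr ht) hp
      · simp [rearr_eq_zero_of_measure_univ_le f (hμ.trans (ENNReal.one_le_ofReal.mpr ht))]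

lemma ofReal_norm_rpow_add_mul_ae_eq {E : Type*} [NormedAddCommGroup E] [MeasurableSpace E]
    (μ : Measure E) [NullSingletonClass μ] (b c : ℝ) (x : E → ℝ≥0∞) :
    (fun ξ => ENNReal.ofReal (‖ξ‖ ^ (b + c)) * x ξ)
      =ᵐ[μ] fun ξ => ENNReal.ofReal (‖ξ‖ ^ b) * (ENNReal.ofReal (‖ξ‖ ^ c) * x ξ) := by
  filter_upwards [μ.ae_ne 0] with ξ hξ
  rw [Real.rpow_add (norm_pos_iff.mpr hξ), ENNReal.ofReal_mul (by positivity), mul_assoc]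

section HaarMeasure

variable {E : Type*} [NormedAddCommGroup E] [NormedSpace ℝ E] [FiniteDimensional ℝ E]
  [MeasurableSpace E] (μ : Measure E) [μ.IsAddHaarMeasure]

open Module Metric

lemma measureReal_ball_pos (x : E) {ρ : ℝ} (hρ : 0 < ρ) : 0 < μ.real (ball x ρ) :=
  ENNReal.toReal_pos (measure_ball_pos μ x hρ).ne' measure_ball_lt_top.ne

variable [BorelSpace E] [Nontrivial E]

lemma measure_rpow_neg_norm_gt_le {a ρ : ℝ} (ha : 0 ≤ a) (hρ : 0 < ρ) :
    μ {ξ | ENNReal.ofReal (ρ ^ (-a)) < ENNReal.ofReal (‖ξ‖ ^ (-a))}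
      ≤ ENNReal.ofReal (ρ ^ finrank ℝ E) * μ (ball 0 1) := by
  rw [← μ.addHaar_ball 0 hρ.le]
  refine measure_mono fun ξ hξ => ?_
  rw [mem_ball_zero_iff]
  by_contra! hρξ
  exact (ENNReal.ofReal_le_ofReal
    (Real.rpow_le_rpow_of_nonpos hρ hρξ (neg_nonpos.mpr ha))).not_gt hξ

lemma rearr_rpow_neg_norm_mul_le {a t : ℝ} (ha : 0 ≤ a) (ht : 0 < t) (F : E → ℝ≥0∞) :
    rearr μ (fun ξ => ENNReal.ofReal (‖ξ‖ ^ (-a)) * F ξ) t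
      ≤ ENNReal.ofReal ((2 * μ.real (ball 0 1) / t) ^ (a / finrank ℝ E))
        * rearr μ F (t / 2) := by
  set d := finrank ℝ E
  have hd : (d : ℝ) ≠ 0 := Nat.cast_ne_zero.mpr finrank_pos.ne'
  have hm := measureReal_ball_pos μ 0 one_pos
  set ρ := (t / (2 * μ.real (ball 0 1))) ^ (1 / (d : ℝ))
  have hρ : 0 < ρ := by positivity
  have hσ : ρ ^ (-a) = (2 * μ.real (ball 0 1) / t) ^ (a / d) := by
    rw [← Real.rpow_mul (by positivity), ← inv_div, Real.inv_rpow (by positivity),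
      ← Real.rpow_neg (by positivity)]
    ring_nf
  have hmeas : μ {ξ | ENNReal.ofReal (ρ ^ (-a)) < ENNReal.ofReal (‖ξ‖ ^ (-a))}
      ≤ ENNReal.ofReal (t / 2) := by
    refine (measure_rpow_neg_norm_gt_le μ ha hρ).trans_eq ?_
    rw [← Real.rpow_natCast, ← Real.rpow_mul (by positivity), one_div_mul_cancel hd,
      Real.rpow_one, ← ofReal_measureReal measure_ball_lt_top.ne,
      ← ENNReal.ofReal_mul (by positivity)]
    congr 1
    field_simp
  have h := rearr_mul_le (g := F) (half_pos ht).le (half_pos ht).le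
    (ENNReal.ofReal_pos.mpr (Real.rpow_pos_of_pos hρ _)).ne' ENNReal.ofReal_ne_top hmeas
  rwa [add_halves, hσ] at h

lemma exists_lorentzNorm_rpow_neg_norm_mul_le {a : ℝ} (ha : 0 ≤ a) {p pt r : ℝ≥0∞} (hr : r ≠ 0)
    (hp : (1 / pt).toReal = (1 / p).toReal + a / finrank ℝ E) :
    ∃ C : ℝ≥0∞, 0 < C ∧ C < ∞ ∧ ∀ F : E → ℝ≥0∞,
      lorentzNorm μ (fun ξ => ENNReal.ofReal (‖ξ‖ ^ (-a)) * F ξ) pt r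
        ≤ C * lorentzNorm μ F p r := by
  set d : ℝ := (finrank ℝ E : ℝ)
  set m := μ.real (ball 0 1)
  set β := (1 / p).toReal
  have hm : 0 < m := measureReal_ball_pos μ 0 one_pos
  refine ⟨ENNReal.ofReal ((2 * m) ^ (a / d) * 2 ^ β), ENNReal.ofReal_pos.mpr (by positivity),
    ENNReal.ofReal_lt_top, fun F => lorentzNorm_le_of_rearr_le hr ENNReal.ofReal_ne_top
      (inv_pos.mpr two_pos) fun t ht => ?_⟩
  have hscale : t ^ (β + a / d) * (2 * m / t) ^ (a / d)
      = (2 * m) ^ (a / d) * 2 ^ β * (2⁻¹ * t) ^ β := by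
    rw [Real.rpow_add ht, Real.div_rpow (by positivity) ht.le, Real.mul_rpow (by norm_num) ht.le,
      Real.inv_rpow zero_le_two]
    field_simp
  calc _ ≤ ENNReal.ofReal t ^ (1 / pt).toReal
        * (ENNReal.ofReal ((2 * m / t) ^ (a / d)) * rearr μ F (t / 2)) := by
        gcongr
        exact rearr_rpow_neg_norm_mul_le μ ha ht F
    _ = _ := by
        rw [← mul_assoc, ← mul_assoc, hp, ENNReal.ofReal_rpow_of_pos ht,
          ENNReal.ofReal_rpow_of_pos (by positivity), ← ENNReal.ofReal_mul (by positivity),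
          ← ENNReal.ofReal_mul (by positivity), hscale, inv_mul_eq_div]

end HaarMeasure

lemma one_div_dualExp_toReal {p : ℝ≥0∞} (hp : 1 ≤ p) : (1 / dualExp p).toReal = 1 - p⁻¹.toReal := by
  rw [dualExp, one_div, inv_inv, one_div,
    ENNReal.toReal_sub_of_le (ENNReal.inv_le_one.mpr hp) ENNReal.one_ne_top, ENNReal.toReal_one]

lemma volume_univ_esp_zero : (volume : Measure (Esp 0)) univ = 1 := by
  simpa [volume_pi, Measure.pi_univ] using
    (EuclideanSpace.volume_preserving_symm_measurableEquiv_toLp (Fin 0)).measure_preimage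
      (MeasurableSet.univ (α := Fin 0 → ℝ)).nullMeasurableSet

theorem sobolev_fourier_lorentz_general (d : ℕ) (q qt : ℝ≥0∞) (s st : ℝ) (r : ℝ≥0∞)
    (hq1 : 1 < q) (hqqt : q ≤ qt) (hr : 1 ≤ r)
    (hreg : s - ((d : ℝ≥0∞) / q).toReal = st - ((d : ℝ≥0∞) / qt).toReal) :
    ∃ C : ℝ≥0∞, 0 < C ∧ C < ∞ ∧ ∀ u : Esp d → ℂ,
      HsL d s q r u < ∞ → HsL d st qt r u ≤ C * HsL d s q r u := by
  have hr0 : r ≠ 0 := (zero_lt_one.trans_le hr).ne'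
  have hq0 : q ≠ 0 := (zero_lt_one.trans hq1).ne'
  have hβ := one_div_dualExp_toReal hq1.le
  have hβt := one_div_dualExp_toReal (hq1.le.trans hqqt)
  have hinv : qt⁻¹.toReal ≤ q⁻¹.toReal :=
    ENNReal.toReal_mono (ENNReal.inv_ne_top.mpr hq0) (ENNReal.inv_le_inv.mpr hqqt)
  simp only [div_eq_mul_inv, ENNReal.toReal_mul, ENNReal.toReal_natCast] at hreg
  by_cases hd : d = 0
  · subst hd
    obtain rfl : s = st := by simpa using hreg
    refine ⟨1, one_pos, one_lt_top, fun u _ => ?_⟩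
    rw [one_mul]
    exact lorentzNorm_le_of_measure_univ_le_one volume_univ_esp_zero.le _ hr0
      (by rw [hβ, hβt]; linarith)
  have : NeZero d := ⟨hd⟩
  have hd_pos : (0 : ℝ) < d := by positivity
  have ha : 0 ≤ s - st := by nlinarith
  obtain ⟨C, hC0, hC, hholder⟩ := exists_lorentzNorm_rpow_neg_norm_mul_le
    (volume : Measure (Esp d)) (a := s - st) (p := dualExp q) (pt := dualExp qt)
    ha hr0 (by rw [finrank_euclideanSpace_fin, hβ, hβt]; field_simp; linarith)
  refine ⟨C, hC0, hC, fun u _ => ?_⟩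
  calc HsL d st qt r u
      = lorentzNorm volume (fun ξ => ENNReal.ofReal (‖ξ‖ ^ (-(s - st)))
          * (ENNReal.ofReal (‖ξ‖ ^ s) * ‖𝓕 u ξ‖₊)) (dualExp qt) r :=
        lorentzNorm_congr_ae
          (by simpa using ofReal_norm_rpow_add_mul_ae_eq volume (-(s - st)) s _) _ _
    _ ≤ C * HsL d s q r u := hholder _

/-- Sobolev inequality for Sobolev-Fourier-Lorentz spaces: if `1 < q ≤ q̃ < ∞`,
`s - d/q = s̃ - d/q̃` and `1 ≤ r ≤ ∞`, then
`‖u‖_{Ḣ^{s̃}_{𝓛^{q̃,r}}} ≤ C ‖u‖_{Ḣ^{s}_{𝓛^{q,r}}}`. -/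
theorem sobolev_fourier_lorentz (d : ℕ) (q qt : ℝ≥0∞) (s st : ℝ) (r : ℝ≥0∞)
    (hq1 : 1 < q) (hqqt : q ≤ qt) (hqt : qt < ∞) (hr : 1 ≤ r)
    (hreg : s - ((d : ℝ≥0∞) / q).toReal = st - ((d : ℝ≥0∞) / qt).toReal) :
    ∃ C : ℝ≥0∞, 0 < C ∧ C < ∞ ∧ ∀ u : Esp d → ℂ,
      HsL d s q r u < ∞ → HsL d st qt r u ≤ C * HsL d s q r u :=
  sobolev_fourier_lorentz_general d q qt s st r hq1 hqqt hr hreg
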